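/- arXiv:2507.18475 — 2 statements merged into one kernel-verified Lean document; each statement's English description precedes it below -/
import Mathlib

section
/- Let Γ be a finite group acting on a set X, and let M be the free abelian group on X (the group of finitely supported functions X → ℤ) with the permutation action of Γ induced by the action on X. Then the first group cohomology H¹(Γ, M) is trivial. -/
/-!
Shapiro's lemma, made explicit. A 1-cocycle `c` with values in `X →₀ A` gives the function
`f g x := c g (g • x)`, which is a 1-cocycle on the action groupoid of `Γ` on `X`:
`f (γ * δ) x = f γ (δ • x) + f δ x`. Its restriction to a stabilizer `Γ_x` is a homomorphism
`Γ_x → A`, hence zero when `Γ` is finite and `A` torsion-free. A groupoid cocycle vanishing on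
all stabilizers is a coboundary `f g x = m x - m (g • x)`, with `m x := f g x` for any `g`
moving `x` to a chosen representative of its orbit. This `m` is finitely supported and
`c` is its coboundary.
-/

/- The permutation action of `Γ` on the free abelian group `X →₀ ℤ` on a `Γ`-set `X`,
given by `γ • f = Finsupp.mapDomain (γ • ·) f`. -/
attribute [local instance] Finsupp.comapSMul Finsupp.comapMulAction
  Finsupp.comapDistribMulAction

variable (Γ M : Type*) [Group Γ] [AddCommGroup M] [DistribMulAction Γ M]

def oneCocycles : AddSubgroup (Γ → M) where
  carrier := {c | ∀ γ δ : Γ, c (γ * δ) = c γ + γ • c δ}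
  zero_mem' := by intro γ δ; simp
  add_mem' := by
    intro a b ha hb γ δ
    simp only [Pi.add_apply, ha γ δ, hb γ δ, smul_add]
    abel
  neg_mem' := by
    intro a ha γ δ
    simp only [Pi.neg_apply, ha γ δ, smul_neg]
    abel

def oneCoboundaries : AddSubgroup (Γ → M) where
  carrier := {c | ∃ m : M, ∀ γ : Γ, c γ = γ • m - m}
  zero_mem' := ⟨0, by simp⟩
  add_mem' := by
    rintro a b ⟨m, hm⟩ ⟨m', hm'⟩
    refine ⟨m + m', fun γ => ?_⟩
    simp only [Pi.add_apply, hm γ, hm' γ, smul_add]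
    abel
  neg_mem' := by
    rintro a ⟨m, hm⟩
    refine ⟨-m, fun γ => ?_⟩
    simp only [Pi.neg_apply, hm γ, smul_neg]
    abel

abbrev H1 := oneCocycles Γ M ⧸ (oneCoboundaries Γ M).addSubgroupOf (oneCocycles Γ M)

section ActionCocycle

variable {Γ X A : Type*} [Group Γ] [MulAction Γ X] [AddCommGroup A]

def IsActionCocycle (f : Γ → X → A) : Prop :=
  ∀ γ δ x, f (γ * δ) x = f γ (δ • x) + f δ x

namespace IsActionCocycle

variable {f : Γ → X → A} (hf : IsActionCocycle f)
include hf

theorem apply_one (x : X) : f 1 x = 0 := by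
  simpa using hf 1 1 x

theorem apply_pow_of_smul_eq {h : Γ} {x : X} (hx : h • x = x) (n : ℕ) :
    f (h ^ n) x = n • f h x := by
  induction n with
  | zero => simp [hf.apply_one]
  | succ n ih => rw [pow_succ, hf, hx, ih, succ_nsmul]

theorem apply_eq_zero_of_smul_eq [Finite Γ] [IsAddTorsionFree A] {h : Γ} {x : X}
    (hx : h • x = x) : f h x = 0 := by
  have h_order : orderOf h • f h x = 0 := by
    rw [← hf.apply_pow_of_smul_eq hx, pow_orderOf_eq_one, hf.apply_one]
  exact (nsmul_eq_zero_iff_right (orderOf_pos h).ne').mp h_order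

variable (hstab : ∀ (h : Γ) (x : X), h • x = x → f h x = 0)
include hstab

theorem congr {g g' : Γ} {x : X} (h : g • x = g' • x) : f g x = f g' x := by
  have hfix : (g * g'⁻¹) • g' • x = g' • x := by rw [mul_smul, inv_smul_smul, h]
  calc f g x = f (g * g'⁻¹ * g') x := by rw [inv_mul_cancel_right]
    _ = f g' x := by rw [hf, hstab _ _ hfix, zero_add]

theorem exists_eq_sub :
    ∃ m : X → A, (∀ g x, f g x = m x - m (g • x)) ∧ ∀ x, ∃ g : Γ, m (g • x) = 0 := by
  let rep : X → X := fun x => (Quotient.mk (MulAction.orbitRel Γ X) x).out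
  have rep_smul (γ : Γ) (x : X) : rep (γ • x) = rep x := by
    have h : (⟦γ • x⟧ : Quotient (MulAction.orbitRel Γ X)) = ⟦x⟧ :=
      Quotient.sound (MulAction.orbitRel_apply.mpr (MulAction.mem_orbit x γ))
    simp only [rep, h]
  have toRep (x : X) : ∃ g : Γ, g • x = rep x := Quotient.mk_out (s := MulAction.orbitRel Γ X) x
  choose g hg using toRep
  refine ⟨fun x => f (g x) x, fun γ x => ?_, fun x => ⟨g x, ?_⟩⟩
  · have hrep : (g (γ • x) * γ) • x = g x • x := by rw [mul_smul, hg, hg, rep_smul]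
    show f γ x = f (g x) x - f (g (γ • x)) (γ • x)
    rw [← hf.congr hstab hrep, hf, add_sub_cancel_left]
  · refine hstab _ _ ?_
    rw [hg, rep_smul, hg]

end IsActionCocycle

end ActionCocycle

section PermutationModule

variable {Γ X A : Type*} [Group Γ] [Finite Γ] [MulAction Γ X] [AddCommGroup A]
  [IsAddTorsionFree A]

theorem mem_oneCoboundaries_of_mem_oneCocycles {c : Γ → X →₀ A}
    (hc : c ∈ oneCocycles Γ (X →₀ A)) : c ∈ oneCoboundaries Γ (X →₀ A) := by
  have hf : IsActionCocycle fun g x => c g (g • x) := fun γ δ x => by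
    dsimp only
    rw [hc γ δ, Finsupp.add_apply, Finsupp.comapSMul_apply, mul_smul, inv_smul_smul]
  obtain ⟨m, hm, hm_zero⟩ := hf.exists_eq_sub fun _ _ => hf.apply_eq_zero_of_smul_eq
  have hm_supp : Function.support m ⊆ ⋃ g : Γ, (g⁻¹ • ·) '' ((c g).support : Set X) := by
    intro x hx
    obtain ⟨g, hg⟩ := hm_zero x
    have hcg : c g (g • x) ≠ 0 := by rwa [hm, hg, sub_zero]
    exact Set.mem_iUnion.mpr ⟨g, g • x, Finsupp.mem_support_iff.mpr hcg, inv_smul_smul g x⟩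
  have hm_fin : (Function.support m).Finite :=
    (Set.finite_iUnion fun g => (c g).support.finite_toSet.image _).subset hm_supp
  refine ⟨Finsupp.ofSupportFinite m hm_fin, fun γ => Finsupp.ext fun x => ?_⟩
  rw [Finsupp.sub_apply, Finsupp.comapSMul_apply, Finsupp.ofSupportFinite_coe]
  simpa only [smul_inv_smul] using hm γ (γ⁻¹ • x)

end PermutationModule

/-- If a finite group `Γ` acts on a set `X`, then the first cohomology of `Γ` with values
in the permutation module `X →₀ ℤ` (the free abelian group on `X`, with the action induced
by the `Γ`-action on `X`) is trivial. -/
theorem h1_permutation_module_trivial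
    (Γ X : Type*) [Group Γ] [Finite Γ] [MulAction Γ X]
    (x : H1 Γ (X →₀ ℤ)) : x = 0 := by
  induction x using QuotientAddGroup.induction_on with
  | H c =>
    rw [QuotientAddGroup.eq_zero_iff, AddSubgroup.mem_addSubgroupOf]
    exact mem_oneCoboundaries_of_mem_oneCocycles c.2
end

section
/- Every unit of the ℝ-algebra ℝ[x,y]/(x² + y² − 1) is the image of a nonzero real constant; that is, the group of units of ℝ[x,y]/(x² + y² − 1) equals the image of ℝˣ under the structure map. -/
/-!
Solving the equation for `y²` presents `ℝ[x,y]/(x² + y² − 1)` as the quadratic algebra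
`ℝ[x] ⊕ ℝ[x]·y` with `y² = −(x² − 1)`. Its norm `a + b y ↦ a² + (x² − 1) b²` is multiplicative,
so a unit has a unit norm, i.e. a nonzero constant. But the leading coefficients of `a²` and
`(x² − 1) b²` are nonnegative and positive respectively, so the two terms cannot cancel: the norm
of `a + b y` with `b ≠ 0` has degree at least `2`. Hence `b = 0`, and then `a² = a · a` is a unit,
so `a` is a nonzero constant.
-/

open Polynomial

namespace Polynomial

variable {R : Type*} [CommRing R] [LinearOrder R] [IsStrictOrderedRing R]

theorem eq_zero_of_isUnit_sq_add_mul_sq {a b c : R[X]} (hc : 0 < c.leadingCoeff)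
    (hc_deg : 0 < c.degree) (h : IsUnit (a ^ 2 + c * b ^ 2)) : b = 0 := by
  by_contra hb
  have hcb : 0 < (c * b ^ 2).leadingCoeff := by
    have := leadingCoeff_ne_zero.mpr hb
    rw [leadingCoeff_mul, leadingCoeff_pow]
    positivity
  have ha : 0 ≤ (a ^ 2).leadingCoeff := by
    rw [leadingCoeff_pow]
    positivity
  have hdeg : (a ^ 2 + c * b ^ 2).degree = max (a ^ 2).degree (c * b ^ 2).degree :=
    degree_add_eq_of_leadingCoeff_add_ne_zero (by positivity)
  have hle : c.degree ≤ (a ^ 2 + c * b ^ 2).degree :=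
    hdeg ▸ (degree_le_mul_left c (pow_ne_zero 2 hb)).trans (le_max_right _ _)
  rw [degree_eq_zero_of_isUnit h] at hle
  exact (hc_deg.trans_le hle).false

end Polynomial

namespace QuadraticAlgebra

section AdjoinRoot

variable {R : Type*} [CommRing R] (a b : R)

theorem root_mul_root_adjoinRoot :
    AdjoinRoot.root (X ^ 2 - C b * X - C a) * AdjoinRoot.root (X ^ 2 - C b * X - C a) =
      a • 1 + b • AdjoinRoot.root (X ^ 2 - C b * X - C a) := by
  have h := AdjoinRoot.eval₂_root (X ^ 2 - C b * X - C a)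
  simp only [eval₂_sub, eval₂_mul, eval₂_X_pow, eval₂_C, eval₂_X] at h
  rw [Algebra.smul_def, Algebra.smul_def, mul_one, AdjoinRoot.algebraMap_eq]
  linear_combination h

noncomputable def adjoinRootEquiv :
    AdjoinRoot (X ^ 2 - C b * X - C a) ≃ₐ[R] QuadraticAlgebra R a b :=
  AlgEquiv.ofAlgHom
    (AdjoinRoot.liftAlgHom _ (Algebra.ofId R _) ω (by simp [sq, omega_mul_omega_eq_algebraMap]))
    (lift ⟨AdjoinRoot.root _, root_mul_root_adjoinRoot a b⟩)
    (algHom_ext (by simp))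
    (AdjoinRoot.algHom_ext (by simp))

end AdjoinRoot

variable {R : Type*} [CommRing R] [LinearOrder R] [IsStrictOrderedRing R]

theorem exists_eq_algebraMap_of_isUnit {c : R[X]} (hc : 0 < c.leadingCoeff)
    (hc_deg : 0 < c.degree) {z : QuadraticAlgebra R[X] (-c) 0} (hz : IsUnit z) :
    ∃ r : Rˣ, z = algebraMap R _ r := by
  have hnorm : IsUnit (z.re ^ 2 + c * z.im ^ 2) := by
    convert isUnit_iff_norm_isUnit.mp hz using 1
    rw [norm_def]
    ring
  have him : z.im = 0 := eq_zero_of_isUnit_sq_add_mul_sq hc hc_deg hnorm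
  rw [him, zero_pow two_ne_zero, mul_zero, add_zero, isUnit_pow_iff two_ne_zero] at hnorm
  obtain ⟨r, hr, hre⟩ := Polynomial.isUnit_iff.mp hnorm
  exact ⟨hr.unit, QuadraticAlgebra.ext hre.symm him⟩

end QuadraticAlgebra

section Circle

variable (R : Type*) [CommRing R]

noncomputable def MvPolynomial.finTwoAlgEquiv : MvPolynomial (Fin 2) R ≃ₐ[R] R[X][X] :=
  (MvPolynomial.finSuccEquiv R 1).trans
    (Polynomial.mapAlgEquiv (MvPolynomial.uniqueAlgEquiv R (Fin 1)))

@[simp]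
theorem MvPolynomial.finTwoAlgEquiv_X_zero : finTwoAlgEquiv R (X 0) = Polynomial.X := by
  simp [finTwoAlgEquiv, finSuccEquiv_X_zero]

@[simp]
theorem MvPolynomial.finTwoAlgEquiv_X_one :
    finTwoAlgEquiv R (X 1) = Polynomial.C Polynomial.X := by
  have h : (X 1 : MvPolynomial (Fin 2) R) = X (Fin.succ 0) := rfl
  rw [finTwoAlgEquiv, AlgEquiv.trans_apply, h, finSuccEquiv_X_succ]
  simp

open MvPolynomial in
noncomputable def circleRingEquiv :
    (MvPolynomial (Fin 2) R ⧸ Ideal.span {(X 0 : MvPolynomial (Fin 2) R) ^ 2 + X 1 ^ 2 - 1}) ≃ₐ[R]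
      QuadraticAlgebra R[X] (-(Polynomial.X ^ 2 - 1)) 0 :=
  (Ideal.quotientEquivAlg _ _ (finTwoAlgEquiv R)
    (by rw [Ideal.map_span, Set.image_singleton]; congr 2; simp; ring)).trans
    ((QuadraticAlgebra.adjoinRootEquiv (-(Polynomial.X ^ 2 - 1) : R[X]) 0).restrictScalars R)

end Circle

open MvPolynomial

/-- Every unit of `ℝ[x,y]/(x² + y² − 1)`, the coordinate ring of the real circle `𝕊¹`,
is the image of a nonzero real constant. -/
theorem units_circle_ring_eq_constants
    (u : (MvPolynomial (Fin 2) ℝ ⧸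
        Ideal.span {(X 0 : MvPolynomial (Fin 2) ℝ) ^ 2 + X 1 ^ 2 - 1})ˣ) :
    ∃ c : ℝˣ,
      (u : MvPolynomial (Fin 2) ℝ ⧸
          Ideal.span {(X 0 : MvPolynomial (Fin 2) ℝ) ^ 2 + X 1 ^ 2 - 1}) =
        algebraMap ℝ
          (MvPolynomial (Fin 2) ℝ ⧸
            Ideal.span {(X 0 : MvPolynomial (Fin 2) ℝ) ^ 2 + X 1 ^ 2 - 1}) (c : ℝ) := by
  have hlc : 0 < (Polynomial.X ^ 2 - 1 : ℝ[X]).leadingCoeff := by simp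
  have hdeg : 0 < (Polynomial.X ^ 2 - 1 : ℝ[X]).degree := by
    rw [show (Polynomial.X ^ 2 - 1 : ℝ[X]).degree = 2 by compute_degree!]
    norm_num
  obtain ⟨c, hc⟩ := QuadraticAlgebra.exists_eq_algebraMap_of_isUnit hlc hdeg
    (u.isUnit.map (circleRingEquiv ℝ))
  exact ⟨c, (circleRingEquiv ℝ).injective (by rw [hc, AlgEquiv.commutes])⟩
end
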